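/- arXiv:2603.22562 — 5 statements merged into one kernel-verified Lean document; each statement's English description precedes it below -/
import Mathlib

section
/- Let ξ be a locally finite subset of ℝ^d such that for every x ∈ ℤ^d and every sign vector σ ∈ {-1,+1}^d the open orthant x + Q_σ (where Q_σ = {y ∈ ℝ^d : σ_i y_i > 0 for all i}) contains at least one point of ξ. Then for every x ∈ ξ the Voronoi cell Vor(x|ξ) = {y ∈ ℝ^d : |y - x| ≤ |y - z| for all z ∈ ξ} is a bounded set. -/
/-!
Fix `x ∈ ξ`. For each sign pattern there is a point `p ∈ ξ` lying, in every coordinate, at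
least `1` beyond `x` in that direction (shift `x` to a nearby integer point and use the orthant
hypothesis). If `y ∈ Vor(x|ξ)` and `p` is chosen for the sign pattern of `y - x`, then
`‖y - x‖ ≤ ‖y - x‖₁ ≤ ⟪y - x, p - x⟫ ≤ ‖p - x‖² / 2`, the last step being `|y - x| ≤ |y - p|`.
Only finitely many sign patterns occur, so the cell lies in a finite union of balls.
-/

noncomputable section

abbrev E (d : ℕ) : Type := EuclideanSpace ℝ (Fin d)

/-- ξ is locally finite: every bounded region contains finitely many points of ξ. -/
def locFin {d : ℕ} (ξ : Set (E d)) : Prop := ∀ r : ℝ, (ξ ∩ Metric.closedBall 0 r).Finite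

/-- The Voronoi cell of nucleus `x` for the configuration `ξ`. -/
def vor {d : ℕ} (ξ : Set (E d)) (x : E d) : Set (E d) := {y | ∀ z ∈ ξ, dist y x ≤ dist y z}

open RealInnerProductSpace

theorem two_inner_le_dist_sq_of_dist_le_dist {F : Type*} [NormedAddCommGroup F]
    [InnerProductSpace ℝ F] {x y p : F} (h : dist y x ≤ dist y p) :
    2 * ⟪y - x, p - x⟫ ≤ dist p x ^ 2 := by
  have hsq : ‖y - x‖ ^ 2 ≤ ‖(y - x) - (p - x)‖ ^ 2 := by
    rw [sub_sub_sub_cancel_right, ← dist_eq_norm, ← dist_eq_norm]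
    gcongr
  rw [norm_sub_sq_real (y - x) (p - x)] at hsq
  rw [dist_eq_norm]
  linarith

theorem EuclideanSpace.norm_le_sum_abs {ι : Type*} [Fintype ι] (v : EuclideanSpace ℝ ι) :
    ‖v‖ ≤ ∑ i, |v i| := by
  classical
  calc ‖v‖ = ‖∑ i, EuclideanSpace.single i (v i)‖ := by
        congr 1; ext j; simp
    _ ≤ ∑ i, ‖EuclideanSpace.single i (v i)‖ := norm_sum_le _ _
    _ = ∑ i, |v i| := by simp

theorem EuclideanSpace.norm_le_inner_of_abs_le {ι : Type*} [Fintype ι]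
    {v w : EuclideanSpace ℝ ι} (h : ∀ i, |v i| ≤ v i * w i) : ‖v‖ ≤ ⟪v, w⟫ := by
  calc ‖v‖ ≤ ∑ i, |v i| := norm_le_sum_abs v
    _ ≤ ∑ i, v i * w i := Finset.sum_le_sum fun i _ => h i
    _ = ⟪v, w⟫ := by simp [PiLp.inner_apply, mul_comm]

theorem exists_mem_forall_le_of_orthants {ι : Type*} {ξ : Set (EuclideanSpace ℝ ι)}
    (horth : ∀ (x : ι → ℤ) (σ : ι → ℝ), (∀ i, σ i = 1 ∨ σ i = -1) →
      ∃ p ∈ ξ, ∀ i, σ i * (p i - (x i : ℝ)) > 0)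
    (x : EuclideanSpace ℝ ι) (b : ι → Bool) :
    ∃ p ∈ ξ, ∀ i, if b i then x i + 1 ≤ p i else p i ≤ x i - 1 := by
  obtain ⟨p, hp, hpos⟩ := horth (fun i => if b i then ⌈x i⌉ + 1 else ⌊x i⌋ - 1)
    (fun i => if b i then 1 else -1) fun i => by cases b i <;> simp
  refine ⟨p, hp, fun i => ?_⟩
  have hi := hpos i
  cases hb : b i <;> simp only [hb, Bool.false_eq_true, if_true, if_false] at hi ⊢ <;>
    push_cast at hi
  · linarith [Int.floor_le (x i)]
  · linarith [Int.le_ceil (x i)]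

theorem abs_sub_le_mul_sub {a x p : ℝ}
    (h : if decide (x ≤ a) then x + 1 ≤ p else p ≤ x - 1) : |a - x| ≤ (a - x) * (p - x) := by
  by_cases hxa : x ≤ a
  · simp only [hxa, decide_true, if_true] at h
    rw [abs_of_nonneg (sub_nonneg.2 hxa)]
    nlinarith
  · simp only [hxa, decide_false, Bool.false_eq_true, if_false] at h
    rw [abs_of_neg (by linarith)]
    nlinarith

theorem stmt0_general (d : ℕ) (ξ : Set (E d))
    (horth : ∀ (x : Fin d → ℤ) (σ : Fin d → ℝ), (∀ i, σ i = 1 ∨ σ i = -1) →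
      ∃ p ∈ ξ, ∀ i, σ i * (p i - (x i : ℝ)) > 0) :
    ∀ x ∈ ξ, Bornology.IsBounded (vor ξ x) := by
  intro x _
  choose P hPξ hP using exists_mem_forall_le_of_orthants horth x
  refine (Bornology.isBounded_iUnion.2 fun b =>
    Metric.isBounded_closedBall (x := x) (r := dist (P b) x ^ 2 / 2)).subset fun y hy => ?_
  let b : Fin d → Bool := fun i => decide (x i ≤ y i)
  refine Set.mem_iUnion.2 ⟨b, Metric.mem_closedBall.2 ?_⟩
  have hvor := two_inner_le_dist_sq_of_dist_le_dist (hy (P b) (hPξ b))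
  calc dist y x = ‖y - x‖ := dist_eq_norm y x
    _ ≤ ⟪y - x, P b - x⟫ :=
      EuclideanSpace.norm_le_inner_of_abs_le fun i => abs_sub_le_mul_sub (hP b i)
    _ ≤ dist (P b) x ^ 2 / 2 := by linarith

/-- if every translated open orthant `x + Q_σ` (x ∈ ℤ^d, σ ∈ {-1,1}^d)
contains a point of ξ, then every Voronoi cell of ξ is bounded. -/
theorem stmt0 (d : ℕ) (ξ : Set (E d)) (hlf : locFin ξ)
    (horth : ∀ (x : Fin d → ℤ) (σ : Fin d → ℝ), (∀ i, σ i = 1 ∨ σ i = -1) →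
      ∃ p ∈ ξ, ∀ i, σ i * (p i - (x i : ℝ)) > 0) :
    ∀ x ∈ ξ, Bornology.IsBounded (vor ξ x) :=
  stmt0_general d ξ horth
end
end

section
/- Let ξ be a locally finite subset of ℝ^d satisfying: for all x ∈ ℤ^d and all σ ∈ {-1,+1}^d, ξ ∩ (x + Q_σ) ≠ ∅. Then for every x ∈ ξ the Voronoi cell Vor(x|ξ) is a convex polytope, i.e. a bounded intersection of finitely many closed half-spaces. -/
noncomputable section

/-!
The orthant condition, applied at the lattice points `N • σ`, yields for each sign pattern `σ`
a point `p_σ ∈ ξ` with `σ_i p_i > N` for all `i`. For `N ≥ ‖x‖ + 1` these `2^d` points surround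
`x`: every direction `u` has some `p_σ` with `⟪u, p_σ - x⟫ ≥ ‖u‖`. Since `y` lies on the side of
`x` of the bisector of `x` and `p` iff `2⟪y - x, p - x⟫ ≤ ‖p - x‖²`, already these points confine
the cell of `x` to a ball, say of radius `r / 2`, around `x`. Then only the finitely many points
of `ξ` within distance `r` of `x` can contribute a facet.
-/

open Metric RealInnerProductSpace

section Bisector

variable {V : Type*} [NormedAddCommGroup V] [InnerProductSpace ℝ V]

lemma dist_le_dist_iff_two_mul_inner_le (x y z : V) :
    dist y x ≤ dist y z ↔ 2 * ⟪y - x, z - x⟫ ≤ ‖z - x‖ ^ 2 := by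
  rw [← sq_le_sq₀ dist_nonneg dist_nonneg, dist_eq_norm, dist_eq_norm,
    show y - z = (y - x) - (z - x) by abel, norm_sub_sq_real (y - x)]
  constructor <;> intro h <;> linarith

lemma dist_le_dist_iff_inner_le (x y z : V) :
    dist y x ≤ dist y z ↔ ⟪(2 : ℝ) • (z - x), y⟫ ≤ ‖z‖ ^ 2 - ‖x‖ ^ 2 := by
  rw [dist_le_dist_iff_two_mul_inner_le, norm_sub_sq_real, real_inner_smul_left]
  simp only [inner_sub_left, inner_sub_right, real_inner_self_eq_norm_sq]
  constructor <;> intro h <;>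
    linarith [real_inner_comm x y, real_inner_comm x z, real_inner_comm y z]

end Bisector

section Voronoi

variable {d : ℕ}

lemma vor_anti {S T : Set (E d)} (h : S ⊆ T) (x : E d) : vor T x ⊆ vor S x :=
  fun _ hy z hz => hy z (h hz)

lemma vor_eq_biInter_halfspace (ξ : Set (E d)) (x : E d) :
    vor ξ x = ⋂ z ∈ ξ, {y | ⟪(2 : ℝ) • (z - x), y⟫ ≤ ‖z‖ ^ 2 - ‖x‖ ^ 2} := by
  ext y
  simp only [vor, Set.mem_iInter, Set.mem_ofPred, dist_le_dist_iff_inner_le]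

lemma exists_vor_eq_iInter_halfspace_of_finite {F : Set (E d)} (hF : F.Finite) (x : E d) :
    ∃ (n : ℕ) (a : Fin n → E d) (b : Fin n → ℝ), vor F x = ⋂ i, {y | ⟪a i, y⟫ ≤ b i} := by
  have := hF.to_subtype
  let e := (Finite.equivFin F).symm
  refine ⟨_, fun i => (2 : ℝ) • ((e i : E d) - x), fun i => ‖(e i : E d)‖ ^ 2 - ‖x‖ ^ 2, ?_⟩
  rw [vor_eq_biInter_halfspace, Set.biInter_eq_iInter]
  exact (e.surjective.iInter_comp _).symm

lemma vor_subset_closedBall {S : Set (E d)} {x : E d} {R : ℝ}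
    (hS : ∀ u : E d, ∃ p ∈ S, ‖p - x‖ ≤ R ∧ ‖u‖ ≤ ⟪u, p - x⟫) :
    vor S x ⊆ closedBall x (R ^ 2 / 2) := by
  intro y hy
  obtain ⟨p, hpS, hpR, hp⟩ := hS (y - x)
  have hcell := (dist_le_dist_iff_two_mul_inner_le x y p).mp (hy p hpS)
  have hR : ‖p - x‖ ^ 2 ≤ R ^ 2 := pow_le_pow_left₀ (norm_nonneg _) hpR 2
  rw [mem_closedBall, dist_eq_norm]
  linarith

lemma vor_eq_vor_inter_closedBall {ξ : Set (E d)} {x : E d} {r : ℝ}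
    (hr : vor (ξ ∩ closedBall x r) x ⊆ closedBall x (r / 2)) :
    vor ξ x = vor (ξ ∩ closedBall x r) x := by
  refine (vor_anti Set.inter_subset_left x).antisymm fun y hy z hz => ?_
  by_cases hzx : dist z x ≤ r
  · exact hy z ⟨hz, hzx⟩
  · have hyx : dist y x ≤ r / 2 := hr hy
    linarith [dist_triangle_left z x y]

lemma locFin.finite_inter_closedBall {ξ : Set (E d)} (hξ : locFin ξ) (x : E d) (r : ℝ) :
    (ξ ∩ closedBall x r).Finite :=
  (hξ (‖x‖ + r)).subset <| Set.inter_subset_inter_right ξ fun y hy => by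
    rw [mem_closedBall, dist_eq_norm] at hy
    rw [mem_closedBall, dist_zero_right]
    linarith [norm_le_norm_add_norm_sub' y x]

end Voronoi

section Orthants

variable {d : ℕ}

def MeetsLatticeOrthants (ξ : Set (E d)) : Prop :=
  ∀ (x : Fin d → ℤ) (σ : Fin d → ℝ), (∀ i, σ i = 1 ∨ σ i = -1) →
    ∃ p ∈ ξ, ∀ i, σ i * (p i - (x i : ℝ)) > 0

lemma norm_le_sum_abs (u : E d) : ‖u‖ ≤ ∑ i, |u i| := by
  rw [EuclideanSpace.norm_eq, Real.sqrt_le_iff]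
  refine ⟨by positivity, ?_⟩
  simpa only [Real.norm_eq_abs, sq_abs] using
    Finset.sum_sq_le_sq_sum_of_nonneg fun i _ => abs_nonneg (u i)

lemma mul_norm_le_inner_of_forall_mul_abs_le {u p : E d} {N : ℝ} (hN : 0 ≤ N)
    (h : ∀ i, N * |u i| ≤ u i * p i) : N * ‖u‖ ≤ ⟪u, p⟫ :=
  calc N * ‖u‖ ≤ N * ∑ i, |u i| := mul_le_mul_of_nonneg_left (norm_le_sum_abs u) hN
    _ = ∑ i, N * |u i| := Finset.mul_sum _ _ _
    _ ≤ ∑ i, u i * p i := Finset.sum_le_sum fun i _ => h i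
    _ = ⟪u, p⟫ := by simp only [PiLp.inner_apply, RCLike.inner_apply, conj_trivial, mul_comm]

lemma MeetsLatticeOrthants.exists_mem_corner {ξ : Set (E d)} (hξ : MeetsLatticeOrthants ξ)
    (N : ℤ) (s : Fin d → Bool) : ∃ p ∈ ξ, ∀ i, N < if s i then p i else -p i := by
  obtain ⟨p, hpξ, hp⟩ := hξ (fun i => if s i then N else -N) (fun i => if s i then 1 else -1)
    fun i => by cases s i <;> simp
  refine ⟨p, hpξ, fun i => ?_⟩
  have hpi := hp i
  cases hs : s i <;> simp only [hs, Bool.false_eq_true, if_true, if_false, Int.cast_neg] at hpi ⊢ <;>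
    linarith

lemma MeetsLatticeOrthants.exists_surrounding_radius {ξ : Set (E d)}
    (hξ : MeetsLatticeOrthants ξ) (x : E d) :
    ∃ R, ∀ u : E d, ∃ p ∈ ξ, ‖p - x‖ ≤ R ∧ ‖u‖ ≤ ⟪u, p - x⟫ := by
  obtain ⟨N, hN⟩ := exists_nat_ge (‖x‖ + 1)
  choose p hpξ hpN using hξ.exists_mem_corner N
  obtain ⟨R, hR⟩ := (Set.finite_range fun s => ‖p s - x‖).bddAbove
  refine ⟨R, fun u => ⟨p fun i => decide (0 ≤ u i), hpξ _, hR ⟨_, rfl⟩, ?_⟩⟩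
  have hcorner : N * ‖u‖ ≤ ⟪u, p fun i => decide (0 ≤ u i)⟫ :=
    mul_norm_le_inner_of_forall_mul_abs_le (Nat.cast_nonneg N) fun i => by
      have hpi := hpN (fun i => decide (0 ≤ u i)) i
      by_cases hu : 0 ≤ u i
      · simp only [hu, decide_true, if_true, Int.cast_natCast] at hpi
        rw [abs_of_nonneg hu]
        nlinarith
      · simp only [hu, decide_false, Bool.false_eq_true, if_false, Int.cast_natCast] at hpi
        rw [abs_of_neg (not_le.mp hu)]
        nlinarith
  rw [inner_sub_right]
  nlinarith [real_inner_le_norm u x, norm_nonneg u]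

end Orthants

/-- under the orthant condition, every Voronoi cell is a convex polytope,
i.e. a bounded intersection of finitely many closed half-spaces. -/
theorem stmt1 (d : ℕ) (ξ : Set (E d)) (hlf : locFin ξ)
    (horth : ∀ (x : Fin d → ℤ) (σ : Fin d → ℝ), (∀ i, σ i = 1 ∨ σ i = -1) →
      ∃ p ∈ ξ, ∀ i, σ i * (p i - (x i : ℝ)) > 0) :
    ∀ x ∈ ξ, Bornology.IsBounded (vor ξ x) ∧
      ∃ (n : ℕ) (a : Fin n → E d) (b : Fin n → ℝ),
        vor ξ x = ⋂ i, {y : E d | (inner ℝ (a i) y : ℝ) ≤ b i} := by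
  intro x _
  obtain ⟨R, hR⟩ := MeetsLatticeOrthants.exists_surrounding_radius horth x
  set r := max R (R ^ 2)
  have hsurround : ∀ u : E d, ∃ p ∈ ξ ∩ closedBall x r, ‖p - x‖ ≤ R ∧ ‖u‖ ≤ ⟪u, p - x⟫ :=
    fun u => (hR u).imp fun p ⟨hpξ, hpR, hp⟩ =>
      ⟨⟨hpξ, mem_closedBall_iff_norm.mpr (hpR.trans (le_max_left _ _))⟩, hpR, hp⟩
  have hnear : vor (ξ ∩ closedBall x r) x ⊆ closedBall x (r / 2) :=
    (vor_subset_closedBall hsurround).trans <|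
      closedBall_subset_closedBall (by linarith [le_max_right R (R ^ 2)])
  rw [vor_eq_vor_inter_closedBall hnear]
  exact ⟨isBounded_closedBall.subset hnear,
    exists_vor_eq_iInter_halfspace_of_finite (hlf.finite_inter_closedBall x r) x⟩
end
end

section
/- Fix ℓ > 0 and d ≥ 1. Let B be a closed Euclidean ball in ℝ^d of radius R ≥ 3ℓd² whose boundary contains the origin. Then there exists z ∈ ℤ^d with |z|_∞ = d such that the cube K_ℓ(z) := zℓ + [-ℓ/2, ℓ/2]^d is contained in the interior of B. -/
noncomputable section

/-- The cube `K_ℓ(z) = zℓ + [-ℓ/2, ℓ/2]^d`. -/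
def cubeK {d : ℕ} (ℓ : ℝ) (z : Fin d → ℤ) : Set (E d) :=
  {y | ∀ i, |y i - (z i : ℝ) * ℓ| ≤ ℓ / 2}

/-- for any closed ball `B` of radius `R ≥ 3ℓd²` whose boundary contains
the origin, there is `z ∈ ℤ^d` with `|z|_∞ = d` such that `K_ℓ(z)` is contained in the
interior of `B`. -/
theorem stmt3 (d : ℕ) (hd : 1 ≤ d) (ℓ : ℝ) (hℓ : 0 < ℓ) (a : E d) (R : ℝ)
    (hR : 3 * ℓ * (d : ℝ) ^ 2 ≤ R) (ha : ‖a‖ = R) :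
    ∃ z : Fin d → ℤ, (∀ i, |z i| ≤ (d : ℤ)) ∧ (∃ i, |z i| = (d : ℤ)) ∧
      cubeK ℓ z ⊆ interior (Metric.closedBall a R) := by
  have hd1 : (1:ℝ) ≤ d := by exact_mod_cast hd
  have hdl : (0:ℝ) ≤ (d:ℝ) * ℓ := by positivity
  have hRpos : 0 < R :=
    lt_of_lt_of_le (by nlinarith [sq_nonneg ((d:ℝ) - 1)]) hR
  set z : Fin d → ℤ := fun i => if 0 ≤ a i then (d : ℤ) else -(d : ℤ) with hz
  refine ⟨z, ?_, ?_, ?_⟩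
  · intro i
    by_cases h : 0 ≤ a i <;> simp [hz, h]
  · refine ⟨⟨0, by omega⟩, ?_⟩
    by_cases h : 0 ≤ a ⟨0, by omega⟩ <;> simp [hz, h]
  · intro y hy
    rw [interior_closedBall a hRpos.ne']
    rw [Metric.mem_ball, EuclideanSpace.dist_eq]
    rw [show R = Real.sqrt (R ^ 2) from (Real.sqrt_sq hRpos.le).symm]
    apply Real.sqrt_lt_sqrt (by positivity)
    simp only [Real.dist_eq, sq_abs]
    have hsumA : ∑ i, (a i) ^ 2 = R ^ 2 := by
      have := EuclideanSpace.norm_eq a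
      rw [ha] at this
      have h2 : R ^ 2 = (∑ i, ‖a i‖ ^ 2) := by
        rw [this]; rw [Real.sq_sqrt (by positivity)]
      simp only [Real.norm_eq_abs, sq_abs] at h2
      linarith
    have hAsum : R ≤ ∑ i, |a i| := by
      have h1 : ∑ i, (a i) ^ 2 ≤ (∑ i, |a i|) ^ 2 := by
        calc ∑ i, (a i) ^ 2 = ∑ i, |a i| ^ 2 := by simp [sq_abs]
        _ ≤ (∑ i, |a i|) ^ 2 :=
          Finset.sum_sq_le_sq_sum_of_nonneg (fun i _ => abs_nonneg _)
      nlinarith [Finset.sum_nonneg (fun i (_ : i ∈ Finset.univ) => abs_nonneg (a i))]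
    have key : ∀ i, (y i - a i) ^ 2 ≤
        (a i) ^ 2 + ((d : ℝ) * ℓ + ℓ / 2) ^ 2 - (2 * d - 1) * ℓ * |a i| := by
      intro i
      have hyi := hy i
      by_cases h : 0 ≤ a i
      · have hzz : ((z i : ℤ) : ℝ) = (d : ℝ) := by simp [hz, h]
        rw [hzz] at hyi
        rw [abs_of_nonneg h]
        obtain ⟨h1, h2⟩ := abs_le.mp hyi
        nlinarith [mul_nonneg h (by linarith : (0:ℝ) ≤ y i - ((d:ℝ)*ℓ - ℓ/2)),
          mul_nonneg (by linarith : (0:ℝ) ≤ (d:ℝ)*ℓ + ℓ/2 - y i)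
            (by linarith : (0:ℝ) ≤ (d:ℝ)*ℓ + ℓ/2 + y i)]
      · push_neg at h
        have hzz : ((z i : ℤ) : ℝ) = -(d : ℝ) := by simp [hz, not_le.mpr h]
        rw [hzz] at hyi
        rw [abs_of_neg h]
        obtain ⟨h1, h2⟩ := abs_le.mp hyi
        nlinarith [mul_nonneg (by linarith : (0:ℝ) ≤ -a i)
            (by linarith : (0:ℝ) ≤ -(y i) - ((d:ℝ)*ℓ - ℓ/2)),
          mul_nonneg (by linarith : (0:ℝ) ≤ (d:ℝ)*ℓ + ℓ/2 - y i)
            (by linarith : (0:ℝ) ≤ (d:ℝ)*ℓ + ℓ/2 + y i)]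
    have h2d1 : (0:ℝ) ≤ (2 * (d:ℝ) - 1) * ℓ := by nlinarith
    have hpoly : (d:ℝ) * ((d:ℝ)*ℓ + ℓ/2)^2 < (2*(d:ℝ) - 1) * ℓ * R := by
      have H1 : (0:ℝ) ≤ ℓ^2 * (d:ℝ)^2 * ((d:ℝ) - 1) := by
        apply mul_nonneg (by positivity); linarith
      have H2 : (0:ℝ) ≤ ℓ^2 * (d:ℝ) * ((d:ℝ) - 1) := by
        apply mul_nonneg (by positivity); linarith
      have H3 : (0:ℝ) ≤ ℓ^2 * ((d:ℝ) - 1) := by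
        apply mul_nonneg (by positivity); linarith
      have hRR : (2*(d:ℝ) - 1) * ℓ * (3 * ℓ * (d:ℝ)^2) ≤ (2*(d:ℝ) - 1) * ℓ * R :=
        mul_le_mul_of_nonneg_left hR h2d1
      nlinarith [mul_pos hℓ hℓ]
    calc ∑ i, (y i - a i) ^ 2
        ≤ ∑ i, ((a i) ^ 2 + ((d : ℝ) * ℓ + ℓ / 2) ^ 2 - (2 * d - 1) * ℓ * |a i|) :=
          Finset.sum_le_sum (fun i _ => key i)
      _ = R ^ 2 + (d : ℝ) * ((d : ℝ) * ℓ + ℓ / 2) ^ 2 - (2 * d - 1) * ℓ * ∑ i, |a i| := by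
          rw [Finset.sum_sub_distrib, Finset.sum_add_distrib, hsumA, Finset.sum_const,
            Finset.card_univ, Fintype.card_fin, ← Finset.mul_sum]
          push_cast; ring
      _ < R ^ 2 := by
          have := mul_le_mul_of_nonneg_left hAsum h2d1
          linarith
end
end

section
/- Let ξ be a locally finite subset of ℝ^d containing the origin, with all Voronoi cells convex polytopes, and let ℓ > 0. Suppose that ξ ∩ K_ℓ(z) ≠ ∅ for every z ∈ ℤ^d with |z|_∞ = d. Then the fundamental region D(0|ξ) is contained in the closed ball of radius 6ℓd² centered at the origin. -/
noncomputable section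

def isPolytope {d : ℕ} (A : Set (E d)) : Prop := ∃ S : Set (E d), S.Finite ∧ A = convexHull ℝ S

/-- The fundamental region of `0`: union over the vertices (extreme points) `v` of
`Vor(0|ξ)` of the closed balls `B(v, |v|)`. -/
def fundRegion0 {d : ℕ} (ξ : Set (E d)) : Set (E d) :=
  ⋃ v ∈ Set.extremePoints ℝ (vor ξ (0 : E d)), Metric.closedBall v ‖v‖

lemma coord_abs_le_norm {d : ℕ} (y : E d) (i : Fin d) : |y i| ≤ ‖y‖ := by
  rw [EuclideanSpace.norm_eq, ← Real.sqrt_sq_eq_abs]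
  apply Real.sqrt_le_sqrt
  have := Finset.single_le_sum (f := fun j => ‖y j‖ ^ 2) (fun j _ => sq_nonneg _)
    (Finset.mem_univ i)
  simpa [Real.norm_eq_abs, sq_abs] using this

set_option maxHeartbeats 1000000 in
lemma vor_norm_le {d : ℕ} (ℓ : ℝ) (hℓ : 0 < ℓ) (ξ : Set (E d))
    (h0 : (0 : E d) ∈ ξ)
    (hcubes : ∀ z : Fin d → ℤ, (∀ i, |z i| ≤ (d : ℤ)) → (∃ i, |z i| = (d : ℤ)) →
      (ξ ∩ cubeK ℓ z).Nonempty) :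
    ∀ y ∈ vor ξ (0 : E d), ‖y‖ ≤ 3 * ℓ * (d : ℝ) ^ 2 := by
  intro y hy
  rcases Nat.eq_zero_or_pos d with hd | hd
  · subst hd
    have : y = 0 := Subsingleton.elim _ _
    simp [this]
  by_contra hR
  push_neg at hR
  set R := ‖y‖ with hRdef
  have hd1 : (1 : ℝ) ≤ d := by exact_mod_cast hd
  have hRpos : 0 < R := lt_trans (by positivity) hR
  obtain ⟨i₀, -, hmax⟩ := Finset.exists_max_image Finset.univ (fun i => |y i|)
    ⟨⟨0, hd⟩, Finset.mem_univ _⟩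
  set m := |y i₀| with hmdef
  have hmR : m ≤ R := coord_abs_le_norm y i₀
  -- R ≤ d * m
  have hRm : R ≤ (d : ℝ) * m := by
    have hsum : ∑ j, ‖y j‖ ^ 2 ≤ (d : ℝ) * m ^ 2 := by
      have : ∀ j ∈ Finset.univ, ‖y j‖ ^ 2 ≤ m ^ 2 := by
        intro j _
        have h1 := hmax j (Finset.mem_univ j)
        rw [Real.norm_eq_abs]
        exact pow_le_pow_left₀ (abs_nonneg _) h1 2
      calc ∑ j, ‖y j‖ ^ 2 ≤ Finset.univ.card • m ^ 2 := Finset.sum_le_card_nsmul _ _ _ this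
        _ = (d : ℝ) * m ^ 2 := by simp [mul_comm]
    have h2 : R ≤ Real.sqrt ((d : ℝ) * m ^ 2) := by
      rw [hRdef, EuclideanSpace.norm_eq]
      exact Real.sqrt_le_sqrt hsum
    have hm0 : 0 ≤ m := abs_nonneg _
    have h3 : Real.sqrt ((d : ℝ) * m ^ 2) ≤ (d : ℝ) * m := by
      rw [show (d : ℝ) * m ^ 2 = (d:ℝ) * m^2 from rfl]
      have : (d : ℝ) * m ^ 2 ≤ ((d : ℝ) * m) ^ 2 := by nlinarith
      calc Real.sqrt ((d : ℝ) * m ^ 2) ≤ Real.sqrt (((d : ℝ) * m) ^ 2) :=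
            Real.sqrt_le_sqrt this
        _ = (d : ℝ) * m := Real.sqrt_sq (by positivity)
    linarith
  have hmpos : 0 < m := by nlinarith
  -- the integer point
  set z : Fin d → ℤ := fun i => round ((d : ℝ) * y i / m) with hzdef
  have hratio : ∀ i, |(d : ℝ) * y i / m| ≤ (d : ℝ) := by
    intro i
    rw [abs_div, abs_mul, abs_of_pos hmpos, div_le_iff₀ hmpos]
    have := hmax i (Finset.mem_univ i)
    have hd0 : (0:ℝ) ≤ d := by positivity
    simpa [Nat.abs_cast] using mul_le_mul_of_nonneg_left this hd0
  have hzb : ∀ i, |z i| ≤ (d : ℤ) := by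
    intro i
    have h1 : |(z i : ℝ)| ≤ |(d : ℝ) * y i / m| + 1/2 := by
      have := abs_sub_round ((d : ℝ) * y i / m)
      have h2 : |(z i : ℝ) - (d : ℝ) * y i / m| ≤ 1/2 := by
        simpa [hzdef, abs_sub_comm] using this
      calc |(z i : ℝ)| ≤ |(d : ℝ) * y i / m| + |(z i : ℝ) - (d : ℝ) * y i / m| := by
            have := abs_add_le ((d : ℝ) * y i / m) ((z i : ℝ) - (d : ℝ) * y i / m)
            simpa using this
        _ ≤ _ := by linarith
    have h3 : |(z i : ℝ)| < (d : ℝ) + 1 := by have := hratio i; linarith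
    have h4 : (|z i| : ℝ) < ((d : ℤ) : ℝ) + 1 := by push_cast; simpa using h3
    have : |z i| < (d : ℤ) + 1 := by exact_mod_cast h4
    omega
  -- exact value at i₀
  have hne : y i₀ ≠ 0 := by
    intro h
    rw [hmdef, h] at hmpos
    simp at hmpos
  have hexact : ((z i₀ : ℤ) : ℝ) = (d : ℝ) * y i₀ / m := by
    rcases abs_cases (y i₀) with ⟨h1, h2⟩ | ⟨h1, h2⟩
    · have hval : (d : ℝ) * y i₀ / m = (d : ℝ) := by
        rw [hmdef, h1, mul_div_assoc, div_self hne, mul_one]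
      rw [hzdef]
      simp only [hval]
      rw [show ((d:ℝ)) = (((d:ℤ)):ℝ) by push_cast; ring, round_intCast]
    · have hval : (d : ℝ) * y i₀ / m = -(d : ℝ) := by
        rw [hmdef, h1, div_neg, mul_div_assoc, div_self hne]; ring
      rw [hzdef]
      simp only [hval]
      have h5 : round ((((-(d:ℤ))) : ℤ) : ℝ) = -(d:ℤ) := round_intCast _
      exact_mod_cast h5
  have hz0 : |z i₀| = (d : ℤ) := by
    have : |((z i₀ : ℤ) : ℝ)| = (d : ℝ) := by
      rw [hexact, abs_div, abs_mul, abs_of_pos hmpos, Nat.abs_cast]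
      rw [← hmdef]
      field_simp
    have : ((|z i₀| : ℤ) : ℝ) = ((d : ℤ) : ℝ) := by push_cast; simpa using this
    exact_mod_cast this
  obtain ⟨x, hxξ, hxc⟩ := hcubes z hzb ⟨i₀, hz0⟩
  -- distance estimate
  set c : ℝ := ℓ * d / m with hcdef
  have hc_pos : 0 < c := by positivity
  have hmlarge : 3 * ℓ * d < m := by nlinarith
  have hc_lt : c < 1 := by
    rw [hcdef, div_lt_one hmpos]; nlinarith
  set w : E d := c • y with hwdef
  have hdyw : dist y w ≤ R - ℓ * d := by
    have h1 : dist y w = (1 - c) * R := by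
      rw [dist_eq_norm, hwdef, show y - c • y = (1 - c) • y by rw [sub_smul, one_smul],
        norm_smul, Real.norm_eq_abs, abs_of_pos (by linarith)]
    rw [h1]
    have : ℓ * d ≤ c * R := by
      rw [hcdef, div_mul_eq_mul_div, le_div_iff₀ hmpos]
      have := mul_le_mul_of_nonneg_left hmR (show (0:ℝ) ≤ ℓ * d by positivity)
      nlinarith
    nlinarith
  have hwi : w i₀ = ℓ * (z i₀ : ℝ) := by
    rw [hwdef]
    show c * y i₀ = _
    rw [hexact, hcdef]
    field_simp
  have hdwx : dist w x < ℓ * d := by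
    have hde : dist w x = Real.sqrt (∑ i, dist (w i) (x i) ^ 2) := EuclideanSpace.dist_eq w x
    rw [hde, Real.sqrt_lt' (by positivity)]
    have hsplit : ∑ i, dist (w i) (x i) ^ 2
        = dist (w i₀) (x i₀) ^ 2 + ∑ i ∈ Finset.univ.erase i₀, dist (w i) (x i) ^ 2 := by
      exact (Finset.add_sum_erase _ (fun i => dist (w i) (x i) ^ 2) (Finset.mem_univ i₀)).symm
    have h1 : dist (w i₀) (x i₀) ^ 2 ≤ (ℓ/2)^2 := by
      have : dist (w i₀) (x i₀) = |x i₀ - (z i₀ : ℝ) * ℓ| := by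
        rw [Real.dist_eq, hwi, abs_sub_comm]; ring_nf
      rw [this]
      have := hxc i₀
      nlinarith [abs_nonneg (x i₀ - (z i₀ : ℝ) * ℓ), hxc i₀]
    have h2 : ∀ i ∈ Finset.univ.erase i₀, dist (w i) (x i) ^ 2 ≤ ℓ ^ 2 := by
      intro i _
      have hcy : w i = ℓ * ((d : ℝ) * y i / m) := by
        show c * y i = _
        rw [hcdef]; field_simp
      have hb1 : |w i - ℓ * (z i : ℝ)| ≤ ℓ / 2 := by
        rw [hcy, show ℓ * ((d : ℝ) * y i / m) - ℓ * (z i : ℝ) = ℓ * ((d : ℝ) * y i / m - (z i : ℝ)) by ring,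
          abs_mul, abs_of_pos hℓ]
        have := abs_sub_round ((d : ℝ) * y i / m)
        have h3 : |(d : ℝ) * y i / m - (z i : ℝ)| ≤ 1/2 := by simpa [hzdef] using this
        nlinarith
      have hb2 := hxc i
      have : dist (w i) (x i) ≤ ℓ := by
        rw [Real.dist_eq]
        calc |w i - x i| ≤ |w i - ℓ * (z i : ℝ)| + |(ℓ * (z i : ℝ)) - x i| := by
              have := abs_sub_le (w i) (ℓ * (z i : ℝ)) (x i); linarith
          _ ≤ ℓ/2 + ℓ/2 := by
              refine add_le_add hb1 ?_
              rw [abs_sub_comm]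
              calc |x i - ℓ * (z i : ℝ)| = |x i - (z i : ℝ) * ℓ| := by ring_nf
                _ ≤ ℓ / 2 := hb2
          _ = ℓ := by ring
      nlinarith [dist_nonneg (x := w i) (y := x i)]
    have h2' : ∑ i ∈ Finset.univ.erase i₀, dist (w i) (x i) ^ 2
        ≤ ((d : ℝ) - 1) * ℓ ^ 2 := by
      calc ∑ i ∈ Finset.univ.erase i₀, dist (w i) (x i) ^ 2
          ≤ (Finset.univ.erase i₀).card • ℓ ^ 2 := Finset.sum_le_card_nsmul _ _ _ h2
        _ = ((d : ℝ) - 1) * ℓ ^ 2 := by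
            rw [Finset.card_erase_of_mem (Finset.mem_univ i₀)]
            simp only [Finset.card_univ, Fintype.card_fin, nsmul_eq_mul]
            rw [Nat.cast_sub hd]
            norm_num
    rw [hsplit]
    have : (ℓ/2)^2 + ((d:ℝ) - 1) * ℓ^2 < (ℓ * d)^2 := by nlinarith
    linarith
  have hcontra : dist y x < R := by
    calc dist y x ≤ dist y w + dist w x := dist_triangle _ _ _
      _ < (R - ℓ * d) + ℓ * d := by
          apply add_lt_add_of_le_of_lt hdyw hdwx
      _ = R := by ring
  have := hy x hxξ
  rw [dist_zero_right] at this
  linarith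

/-- if `ξ` meets every cube `K_ℓ(z)` with `|z|_∞ = d`, then the fundamental
region `D(0|ξ)` is contained in the closed ball of radius `6ℓd²`. -/
theorem stmt4 (d : ℕ) (ℓ : ℝ) (hℓ : 0 < ℓ) (ξ : Set (E d)) (hlf : locFin ξ)
    (h0 : (0 : E d) ∈ ξ) (hpoly : ∀ x ∈ ξ, isPolytope (vor ξ x))
    (hcubes : ∀ z : Fin d → ℤ, (∀ i, |z i| ≤ (d : ℤ)) → (∃ i, |z i| = (d : ℤ)) →
      (ξ ∩ cubeK ℓ z).Nonempty) :
    fundRegion0 ξ ⊆ Metric.closedBall (0 : E d) (6 * ℓ * (d : ℝ) ^ 2) := by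
  intro p hp
  simp only [fundRegion0, Set.mem_iUnion] at hp
  obtain ⟨v, hv, hpv⟩ := hp
  have hv' : v ∈ vor ξ (0 : E d) := hv.1
  have h3 : ‖v‖ ≤ 3 * ℓ * (d : ℝ) ^ 2 := vor_norm_le ℓ hℓ ξ h0 hcubes v hv'
  rw [Metric.mem_closedBall] at hpv ⊢
  calc dist p 0 ≤ dist p v + dist v 0 := dist_triangle _ _ _
    _ ≤ ‖v‖ + ‖v‖ := by rw [dist_zero_right]; linarith
    _ ≤ 6 * ℓ * (d : ℝ) ^ 2 := by linarith
end
end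

section
/- Fix R > 0 and a locally finite set ξ ⊂ ℝ^d satisfying: every open ball of radius R/8 centered at a point of the closure of B_{3R/4}(C_0) contains a point of ξ (event 𝒜₁), where C_0 = [0,R]^d and B_r(A) denotes the open r-neighborhood of A. Then: (i) every y ∈ ξ ∩ B_{5R/8}(C_0) has Voronoi cell of radius at most R/8, i.e. max{|w − y| : w ∈ Vor(y|ξ)} ≤ R/8; and (ii) every y ∈ ξ whose Voronoi cell intersects B_{R/2}(C_0) lies in B_{5R/8}(C_0). -/
open RealInnerProductSpace

noncomputable section

/-- The box `C_0 = [0,R]^d`. -/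
def C0 {d : ℕ} (R : ℝ) : Set (E d) := {y | ∀ i, y i ∈ Set.Icc (0 : ℝ) R}

lemma convex_bisector_halfspace {d : ℕ} (a b : E d) :
    Convex ℝ {x : E d | dist x a ≤ dist x b} := by
  have h : {x : E d | dist x a ≤ dist x b}
      = {x : E d | ⟪x, b - a⟫ ≤ (‖b‖ ^ 2 - ‖a‖ ^ 2) / 2} := by
    ext x
    simp only [Set.mem_setOf_eq, dist_eq_norm]
    rw [← Real.sqrt_sq (norm_nonneg (x - a)), ← Real.sqrt_sq (norm_nonneg (x - b)),
      Real.sqrt_le_sqrt_iff (by positivity), norm_sub_sq_real, norm_sub_sq_real,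
      inner_sub_right]
    constructor <;> intro h <;> nlinarith
  rw [h]
  exact convex_halfSpace_le ⟨fun x y => inner_add_left x y _,
    fun c x => real_inner_smul_left x _ c⟩ _

lemma convex_vor {d : ℕ} (ξ : Set (E d)) (y : E d) : Convex ℝ (vor ξ y) := by
  have : vor ξ y = ⋂ z ∈ ξ, {x : E d | dist x y ≤ dist x z} := by
    ext x; simp [vor]
  rw [this]
  exact convex_iInter fun z => convex_iInter fun _ => convex_bisector_halfspace y z

/-- under the covering hypothesis 𝒜₁ (every point of the closure of
`B_{3R/4}(C_0)` is within distance `R/8` of `ξ`):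
(i) every `y ∈ ξ ∩ B_{5R/8}(C_0)` has Voronoi cell of radius at most `R/8`;
(ii) every `y ∈ ξ` whose Voronoi cell meets `B_{R/2}(C_0)` lies in `B_{5R/8}(C_0)`. -/
theorem stmt16 (d : ℕ) (R : ℝ) (hR : 0 < R) (ξ : Set (E d)) (hlf : locFin ξ)
    (hA1 : ∀ y ∈ closure (Metric.thickening (3 * R / 4) (C0 R)),
      ∃ p ∈ ξ, dist p y < R / 8) :
    (∀ y ∈ ξ, y ∈ Metric.thickening (5 * R / 8) (C0 (d := d) R) →
      ∀ w ∈ vor ξ y, dist w y ≤ R / 8) ∧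
    (∀ y ∈ ξ, (vor ξ y ∩ Metric.thickening (R / 2) (C0 R)).Nonempty →
      y ∈ Metric.thickening (5 * R / 8) (C0 R)) := by
  constructor
  · intro y hy hythick w hw
    by_contra hcon
    push_neg at hcon
    obtain ⟨c, hc, hyc⟩ := Metric.mem_thickening_iff.mp hythick
    have hwy : (0 : ℝ) < dist w y := lt_trans (by linarith) hcon
    set t : ℝ := (R / 8) / dist w y with ht
    have ht0 : 0 ≤ t := by positivity
    have ht1 : t ≤ 1 := by
      rw [ht, div_le_one hwy]; linarith
    set u : E d := (1 - t) • y + t • w with hu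
    have huvor : u ∈ vor ξ y := by
      have hyvor : y ∈ vor ξ y := fun z hz => by simp [dist_nonneg]
      exact convex_vor ξ y hyvor hw (by linarith) ht0 (by ring)
    have huy : dist u y = R / 8 := by
      have h1 : u - y = t • (w - y) := by
        rw [hu]; module
      rw [dist_eq_norm, h1, norm_smul, Real.norm_eq_abs, abs_of_nonneg ht0,
        ht, ← dist_eq_norm, div_mul_cancel₀ _ (ne_of_gt hwy)]
    have huthick : u ∈ closure (Metric.thickening (3 * R / 4) (C0 R)) := by
      apply subset_closure
      rw [Metric.mem_thickening_iff]
      refine ⟨c, hc, ?_⟩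
      calc dist u c ≤ dist u y + dist y c := dist_triangle u y c
        _ < R / 8 + 5 * R / 8 := by rw [huy]; linarith
        _ ≤ 3 * R / 4 := by linarith
    obtain ⟨p, hp, hpu⟩ := hA1 u huthick
    have := huvor p hp
    rw [huy, dist_comm u p] at this
    linarith
  · intro y hy ⟨w, hwvor, hwthick⟩
    obtain ⟨c, hc, hwc⟩ := Metric.mem_thickening_iff.mp hwthick
    have hwcl : w ∈ closure (Metric.thickening (3 * R / 4) (C0 R)) := by
      apply subset_closure
      rw [Metric.mem_thickening_iff]
      exact ⟨c, hc, by linarith⟩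
    obtain ⟨p, hp, hpw⟩ := hA1 w hwcl
    have hwy : dist w y ≤ dist w p := hwvor p hp
    rw [dist_comm p w] at hpw
    rw [Metric.mem_thickening_iff]
    refine ⟨c, hc, ?_⟩
    calc dist y c ≤ dist y w + dist w c := dist_triangle y w c
      _ < R / 8 + R / 2 := by rw [dist_comm y w]; linarith
      _ ≤ 5 * R / 8 := by linarith
end
end
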